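/- In an MV-algebra, for ideals I₁, ..., Iₙ₋₁, Iₙ, the intersection over i < n of the ideals (Iᵢ, Iₙ) equals the ideal ((⋂ᵢ<ₙ Iᵢ), Iₙ), i.e., generating an ideal with Iₙ commutes with finite intersections: ⋂ᵢ(Iᵢ, Iₙ) = (⋂ᵢ Iᵢ, Iₙ). -/

import Mathlib

/-!
If `x ≤ cᵢ ⊕ dᵢ` with `cᵢ ∈ Iᵢ` and `dᵢ ∈ J` for every `i`, put `d = d₀ ⊕ ⋯ ⊕ dₙ₋₁ ∈ J`.
Then `x ⊖ d ≤ x ⊖ dᵢ ≤ cᵢ`, so `x ⊖ d` lies in every `Iᵢ`, and `x ≤ (x ⊖ d) ⊕ d`.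
-/

/-- An MV-algebra. -/
class MV (A : Type*) where
  add : A → A → A
  neg : A → A
  zero : A
  add_assoc : ∀ a b c, add (add a b) c = add a (add b c)
  add_comm : ∀ a b, add a b = add b a
  add_zero : ∀ a, add a zero = a
  neg_neg : ∀ a, neg (neg a) = a
  add_neg_zero : ∀ a, add a (neg zero) = neg zero
  lukasiewicz : ∀ a b, add (neg (add (neg a) b)) b = add (neg (add (neg b) a)) a

namespace MV
variable {A : Type*} [MV A]
/-- a ⊖ b := ¬(¬a ⊕ b) -/
def sub (a b : A) : A := neg (add (neg a) b)
/-- a ∨ b := (a ⊖ b) ⊕ b -/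
def sup (a b : A) : A := add (sub a b) b
/-- a ∧ b := ¬(¬a ∨ ¬b) -/
def inf (a b : A) : A := neg (sup (neg a) (neg b))
/-- a ≤ b iff a ⊖ b = 0 -/
def le (a b : A) : Prop := sub a b = zero
/-- Ideal: contains 0, closed under ⊕, downward closed. -/
def IsIdeal (I : Set A) : Prop :=
  zero ∈ I ∧ (∀ a b : A, a ∈ I → b ∈ I → add a b ∈ I) ∧
    (∀ a b : A, b ∈ I → le a b → a ∈ I)
/-- Congruence modulo an ideal: x ≡ y (mod I) iff x ⊖ y ∈ I and y ⊖ x ∈ I. -/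
def cong (I : Set A) (x y : A) : Prop := sub x y ∈ I ∧ sub y x ∈ I
/-- The ideal (I, J) generated by I ∪ J: elements bounded by c ⊕ d, c ∈ I, d ∈ J. -/
def gen (I J : Set A) : Set A := {x | ∃ c ∈ I, ∃ d ∈ J, le x (add c d)}
end MV

namespace MV

variable {A : Type*} [MV A]

theorem add_left_comm (a b c : A) : add a (add b c) = add b (add a c) := by
  rw [← add_assoc, add_comm a b, add_assoc]

theorem zero_add (a : A) : add zero a = a := by
  rw [add_comm, add_zero]

theorem neg_zero_add (a : A) : add (neg zero) a = neg zero := by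
  rw [add_comm, add_neg_zero]

theorem neg_add_self (a : A) : add (neg a) a = neg zero := by
  simpa [add_neg_zero, neg_neg, zero_add] using (lukasiewicz a (neg zero)).symm

theorem le_iff_neg_add_eq {a b : A} : le a b ↔ add (neg a) b = neg zero := by
  rw [le, sub]
  exact ⟨fun h => by rw [← neg_neg (add _ _), h], fun h => by rw [h, neg_neg]⟩

theorem le_refl (a : A) : le a a :=
  le_iff_neg_add_eq.2 (neg_add_self a)

theorem le_add_right (a b : A) : le a (add a b) := by
  rw [le_iff_neg_add_eq, ← add_assoc, neg_add_self, neg_zero_add]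

theorem sub_le_iff_le_add {a b c : A} : le (sub a b) c ↔ le a (add b c) := by
  simp only [le, sub, neg_neg, add_assoc]

theorem le_add_sub (a b : A) : le a (add b (sub a b)) :=
  sub_le_iff_le_add.1 (le_refl _)

theorem sub_add_cancel_of_le {a b : A} (h : le a b) : add (sub b a) a = b := by
  rw [le, sub] at h
  rw [sub, lukasiewicz, h, zero_add]

theorem le_trans {a b c : A} (hab : le a b) (hbc : le b c) : le a c := by
  rw [le_iff_neg_add_eq] at hab ⊢
  rw [← sub_add_cancel_of_le hbc, add_left_comm, hab, add_neg_zero]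

theorem add_le_add_left {a b : A} (h : le a b) (c : A) : le (add c a) (add c b) := by
  rw [← sub_add_cancel_of_le h, add_comm (sub b a), ← add_assoc]
  exact le_add_right _ _

theorem sub_le_sub_left {b c : A} (h : le b c) (a : A) : le (sub a c) (sub a b) := by
  rw [sub_le_iff_le_add]
  refine le_trans (le_add_sub a b) ?_
  rw [add_comm b, add_comm c]
  exact add_le_add_left h _

theorem le_foldr_add {l : List A} {a : A} (ha : a ∈ l) : le a (l.foldr add zero) := by
  induction l with
  | nil => cases ha
  | cons b l ih =>
    rcases List.mem_cons.1 ha with rfl | ha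
    · exact le_add_right _ _
    · rw [List.foldr_cons, add_comm]
      exact le_trans (ih ha) (le_add_right _ _)

theorem gen_mono_left {I I' : Set A} (h : I ⊆ I') (J : Set A) : gen I J ⊆ gen I' J :=
  fun _ ⟨c, hc, d, hd, hx⟩ => ⟨c, h hc, d, hd, hx⟩

namespace IsIdeal

variable {I : Set A}

theorem foldr_add_mem (hI : IsIdeal I) {l : List A} (hl : ∀ a ∈ l, a ∈ I) :
    l.foldr add zero ∈ I := by
  induction l with
  | nil => exact hI.1
  | cons b l ih =>
    exact hI.2.1 _ _ (hl b List.mem_cons_self) (ih fun a ha => hl a (List.mem_cons_of_mem _ ha))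

theorem sub_mem_of_le_add (hI : IsIdeal I) {x c d e : A} (hc : c ∈ I) (hx : le x (add c d))
    (hde : le d e) : sub x e ∈ I := by
  refine hI.2.2 _ _ hc (le_trans (sub_le_sub_left hde x) ?_)
  rw [sub_le_iff_le_add, add_comm]
  exact hx

end IsIdeal

end MV

open MV in
theorem stmt6 {A : Type*} [MV A] {n : ℕ} {I : Fin n → Set A} {J : Set A}
    (hI : ∀ i, IsIdeal (I i)) (hJ : IsIdeal J) :
    (⋂ i, gen (I i) J) = gen (⋂ i, I i) J := by
  refine Set.Subset.antisymm (fun x hx => ?_)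
    (Set.subset_iInter fun i => gen_mono_left (Set.iInter_subset I i) J)
  choose c hc d hd hx using Set.mem_iInter.1 hx
  set e := (List.ofFn d).foldr add zero
  have he : e ∈ J := hJ.foldr_add_mem fun a ha => by
    obtain ⟨i, rfl⟩ := List.mem_ofFn.1 ha
    exact hd i
  have hde (i : Fin n) : le (d i) e := le_foldr_add (List.mem_ofFn.2 ⟨i, rfl⟩)
  refine ⟨sub x e, Set.mem_iInter.2 fun i => (hI i).sub_mem_of_le_add (hc i) (hx i) (hde i),
    e, he, ?_⟩
  rw [MV.add_comm]
  exact le_add_sub x e
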